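/- Let φ be a Schur generator with associated outer function ψ and f₀ := −φ̄ψ/ψ̄, let Γ := Γ_{f₀} and assume ‖Γ‖ < 1. Define ǩ := ψ̂(0)·(ψ·(I − Γ*Γ)^{−1}1, P₊(f₀·(I − Γ*Γ)^{−1}1))ᵀ, where 1 denotes the constant function. Then for every y ∈ H²: ⟨(ψy, P₊(f₀y))ᵀ, ǩ⟩_{L²(𝕋;ℂ²)} = ψ̂(0)·ŷ(0); that is, ǩ is the reproducing kernel at the origin of the space Ȟ_φ. -/

import Mathlib

open MeasureTheory Complex Filter Finset AddCircle
open scoped Real ENNReal NNReal ComplexConjugate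

noncomputable section

instance : Fact (0 < 2 * Real.pi) := ⟨by positivity⟩

abbrev UC := AddCircle (2 * Real.pi)

abbrev mUC : Measure UC := AddCircle.haarAddCircle

/-- Membership in the Hardy space `H²` of the circle. -/
def MemH2 (f : UC → ℂ) : Prop :=
  MemLp f 2 mUC ∧ ∀ n : ℤ, n < 0 → fourierCoeff f n = 0

/-- Membership in the Hardy space `H^∞` of the circle. -/
def MemHinf (f : UC → ℂ) : Prop :=
  MemLp f ⊤ mUC ∧ ∀ n : ℤ, n < 0 → fourierCoeff f n = 0

/-- Analytic trigonometric polynomials. -/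
def AnalyticPoly (p : UC → ℂ) : Prop :=
  ∃ (N : ℕ) (c : ℕ → ℂ), p = fun t => ∑ n ∈ Finset.range N, c n * fourier (n : ℤ) t

/-- `h ∈ H²` is outer if `h · (analytic polynomials)` is dense in `H²`. -/
def IsOuter (h : UC → ℂ) : Prop :=
  MemH2 h ∧ ∀ f : UC → ℂ, MemH2 f → ∀ ε : ℝ, 0 < ε →
    ∃ p : UC → ℂ, AnalyticPoly p ∧
      eLpNorm (fun t => f t - h t * p t) 2 mUC < ENNReal.ofReal ε

/-- Inner functions: bounded analytic with unimodular boundary values. -/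
def IsInnerFn (Θ : UC → ℂ) : Prop :=
  MemHinf Θ ∧ ∀ᵐ t ∂mUC, ‖Θ t‖ = 1

/-- A Schur generator. -/
def SchurGen (φ : UC → ℂ) : Prop :=
  MemHinf φ ∧ eLpNorm φ ⊤ mUC ≤ 1 ∧
  Integrable (fun t => Real.log (1 - ‖φ t‖)) mUC ∧
  fourierCoeff φ 0 = 0

/-- `ψ` is the outer function associated with `φ`: `|ψ|² = 1 - |φ|²` a.e. and `ψ̂(0) > 0`. -/
def IsAssocOuter (φ ψ : UC → ℂ) : Prop :=
  IsOuter ψ ∧ (∀ᵐ t ∂mUC, ‖ψ t‖ ^ 2 = 1 - ‖φ t‖ ^ 2) ∧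
  0 < (fourierCoeff ψ 0).re ∧ (fourierCoeff ψ 0).im = 0

/-- `f₀ := -φ̄ψ/ψ̄`. -/
def fzero (φ ψ : UC → ℂ) : UC → ℂ := fun t => -(conj (φ t) * ψ t) / conj (ψ t)

/-- Regularity of a Schur generator `φ` (with associated outer function `ψ`). -/
def Regular (φ ψ : UC → ℂ) : Prop :=
  {f : UC → ℂ | MemLp f ⊤ mUC ∧ eLpNorm f ⊤ mUC ≤ 1 ∧
      ∀ n : ℤ, n < 0 → fourierCoeff f n = fourierCoeff (fzero φ ψ) n}
  = {f : UC → ℂ | ∃ E : UC → ℂ, MemHinf E ∧ eLpNorm E ⊤ mUC ≤ 1 ∧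
      f =ᵐ[mUC] fun t => fzero φ ψ t + ψ t ^ 2 * E t / (1 - φ t * E t)}

open scoped Classical in
/-- The Riesz projection `P₊` of an `L²` function, defined (up to a.e. equality) by matching
nonnegative Fourier coefficients. -/
def Pplus (f : UC → ℂ) : UC → ℂ :=
  if h : ∃ g : UC → ℂ, MemLp g 2 mUC ∧ (∀ n : ℤ, n < 0 → fourierCoeff g n = 0) ∧
      ∀ n : ℤ, 0 ≤ n → fourierCoeff g n = fourierCoeff f n
  then h.choose else 0

/-- Membership in `Ȟ_φ`, the closure in `H²(ℂ²)` of `{(ψy, P₊(f₀y)) : y ∈ H²}`. -/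
def InHcheck (ψ f₀ : UC → ℂ) (x₁ x₂ : UC → ℂ) : Prop :=
  MemLp x₁ 2 mUC ∧ MemLp x₂ 2 mUC ∧
  ∀ ε : ℝ, 0 < ε → ∃ y : UC → ℂ, MemH2 y ∧
    eLpNorm (fun t => x₁ t - ψ t * y t) 2 mUC < ENNReal.ofReal ε ∧
    eLpNorm (fun t => x₂ t - Pplus (fun s => f₀ s * y s) t) 2 mUC < ENNReal.ofReal ε

/-- Membership in `Ĥ_φ = H²(ℂ²) ⊖ (φ,ψ)ᵀ H²`. -/
def InHhat (φ ψ : UC → ℂ) (x₁ x₂ : UC → ℂ) : Prop :=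
  MemH2 x₁ ∧ MemH2 x₂ ∧ ∀ y : UC → ℂ, MemH2 y →
    ∫ t, (x₁ t * conj (φ t * y t) + x₂ t * conj (ψ t * y t)) ∂mUC = 0

/-- The Hankel operator `Γ_f = P₋(f ·)` has norm strictly less than `1`. -/
def HankelNormLt1 (f : UC → ℂ) : Prop :=
  ∃ c : ℝ≥0∞, c < 1 ∧ ∀ x : UC → ℂ, MemH2 x →
    eLpNorm (fun t => f t * x t - Pplus (fun s => f s * x s) t) 2 mUC ≤ c * eLpNorm x 2 mUC

/-- Strong regularity: regular and `‖Γ_{f₀}‖ < 1`. -/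
def StronglyRegular (φ ψ : UC → ℂ) : Prop :=
  Regular φ ψ ∧ HankelNormLt1 (fzero φ ψ)

/-- The arc of the circle of length `ℓ` starting at `a`. -/
def arc (a ℓ : ℝ) : Set UC := (fun x : ℝ => (x : UC)) '' Set.Ioo a (a + ℓ)

/-- Muckenhoupt `A₂` condition for a scalar weight on the circle. -/
def IsA2 (w : UC → ℝ) : Prop :=
  ∃ C : ℝ≥0, ∀ a ℓ : ℝ, 0 < ℓ → ℓ ≤ 2 * Real.pi →
    (∫⁻ t in arc a ℓ, ENNReal.ofReal (w t) ∂mUC) *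
      (∫⁻ t in arc a ℓ, (ENNReal.ofReal (w t))⁻¹ ∂mUC) ≤
      (C : ℝ≥0∞) * ENNReal.ofReal (ℓ / (2 * Real.pi)) ^ 2

/-- Normalized average of a function over an arc. -/
def avgArc (F : UC → ℂ) (a ℓ : ℝ) : ℂ :=
  ((ℓ / (2 * Real.pi) : ℝ) : ℂ)⁻¹ * ∫ t in arc a ℓ, F t ∂mUC

/-- The matrix weight `W = [[1, φ], [φ̄, 1]]`. -/
def Wmat (φ : UC → ℂ) (t : UC) : Matrix (Fin 2) (Fin 2) ℂ := !![1, φ t; conj (φ t), 1]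

/-- Its pointwise inverse `W⁻¹ = (1-|φ|²)⁻¹ [[1, -φ], [-φ̄, 1]]`. -/
def WmatInv (φ : UC → ℂ) (t : UC) : Matrix (Fin 2) (Fin 2) ℂ :=
  (((1 - ‖φ t‖ ^ 2 : ℝ) : ℂ))⁻¹ • !![1, -φ t; -conj (φ t), 1]

/-- Entrywise normalized average of a matrix-valued function over an arc. -/
def avgMat (F : UC → Matrix (Fin 2) (Fin 2) ℂ) (a ℓ : ℝ) : Matrix (Fin 2) (Fin 2) ℂ :=
  Matrix.of fun i j => avgArc (fun t => F t i j) a ℓ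

/-- The matrix `A₂` condition for `W = [[1, φ], [φ̄, 1]]`: the entries of `W` and `W⁻¹` are
integrable and `sup_I ‖⟨W⟩_I^{1/2} ⟨W⁻¹⟩_I^{1/2}‖ < ∞`; since
`‖⟨W⟩^{1/2}⟨W⁻¹⟩^{1/2}‖² ≤ tr(⟨W⟩⟨W⁻¹⟩) ≤ 2‖⟨W⟩^{1/2}⟨W⁻¹⟩^{1/2}‖²`, this is expressed via
uniform boundedness of the trace of the product of the averages. -/
def MatrixA2 (φ : UC → ℂ) : Prop :=
  Integrable (fun t => (1 - ‖φ t‖ ^ 2)⁻¹) mUC ∧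
  ∃ C : ℝ, ∀ a ℓ : ℝ, 0 < ℓ → ℓ ≤ 2 * Real.pi →
    (Matrix.trace (avgMat (Wmat φ) a ℓ * avgMat (WmatInv φ) a ℓ)).re ≤ C

/-- The Toeplitz operator `T_v : H² → H²` is invertible (i.e. bijective on `H²`,
up to a.e. equality; its inverse is then automatically bounded). -/
def ToeplitzInvertible (v : UC → ℂ) : Prop :=
  (∀ x : UC → ℂ, MemH2 x →
      Pplus (fun t => v t * x t) =ᵐ[mUC] (fun _ => (0 : ℂ)) → x =ᵐ[mUC] (fun _ => (0 : ℂ))) ∧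
  ∀ z : UC → ℂ, MemH2 z → ∃ x : UC → ℂ, MemH2 x ∧ Pplus (fun t => v t * x t) =ᵐ[mUC] z


/-!
Write `J y = (ψ y, P₊(f₀ y))` and `Γ = P₋(f₀ ·)`. Since the outer function `ψ` vanishes only on
a null set, `|f₀| = |φ|` and hence `|ψ|² + |f₀|² = 1` a.e., so `⟨ψ y, ψ q⟩ + ⟨f₀ y, f₀ q⟩ = ⟨y, q⟩`.
Splitting `f₀ y` and `f₀ q` into their `H²` and `H²₋` parts gives
`⟨J y, J q⟩ = ⟨y, q⟩ - ⟨Γ y, Γ q⟩ = ⟨y, (I - Γ*Γ) q⟩`, which is `⟨y, 1⟩ = ŷ(0)` for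
`q = (I - Γ*Γ)⁻¹ 1`; finally `ψ̂(0)` is real.
-/

theorem MeasureTheory.MemLp.integrable_mul_conj {α : Type*} [MeasurableSpace α] {μ : Measure α}
    {f g : α → ℂ} (hf : MemLp f 2 μ) (hg : MemLp g 2 μ) :
    Integrable (fun t => f t * conj (g t)) μ :=
  hf.integrable_mul hg.star

section FourierL2

variable {T : ℝ} [Fact (0 < T)] {f g : AddCircle T → ℂ}

theorem fourierCoeff.sub (hf : Integrable f haarAddCircle) (hg : Integrable g haarAddCircle) :
    fourierCoeff (f - g) = fourierCoeff f - fourierCoeff g := by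
  ext n
  simpa [fourierCoeff, -fourier_apply, mul_sub] using
    integral_sub (hf.fourier_smul (-n)) (hg.fourier_smul (-n))

theorem fourierCoeff_zero_eq_integral (f : AddCircle T → ℂ) :
    fourierCoeff f 0 = ∫ t, f t ∂haarAddCircle := by
  simp [fourierCoeff]

theorem integral_mul_conj_eq_tsum_fourierCoeff (hf : MemLp f 2 haarAddCircle)
    (hg : MemLp g 2 haarAddCircle) :
    ∫ t, f t * conj (g t) ∂haarAddCircle =
      ∑' n : ℤ, fourierCoeff f n * conj (fourierCoeff g n) := by
  have hinner : inner ℂ (hg.toLp g) (hf.toLp f) = ∫ t, f t * conj (g t) ∂haarAddCircle := by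
    rw [L2.inner_def]
    refine integral_congr_ae ?_
    filter_upwards [hf.coeFn_toLp, hg.coeFn_toLp] with t hft hgt
    rw [RCLike.inner_apply, hft, hgt]
  rw [← hinner, ← fourierBasis.repr.inner_map_map, lp.inner_eq_tsum]
  refine tsum_congr fun n => ?_
  rw [RCLike.inner_apply, fourierBasis_repr, fourierBasis_repr,
    fourierCoeff_congr_ae hf.coeFn_toLp, fourierCoeff_congr_ae hg.coeFn_toLp, mul_comm]

theorem integral_mul_conj_eq_zero_of_fourierCoeff (hf : MemLp f 2 haarAddCircle)
    (hg : MemLp g 2 haarAddCircle) (h : ∀ n, fourierCoeff f n = 0 ∨ fourierCoeff g n = 0) :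
    ∫ t, f t * conj (g t) ∂haarAddCircle = 0 := by
  rw [integral_mul_conj_eq_tsum_fourierCoeff hf hg]
  refine (tsum_congr fun n => ?_).trans tsum_zero
  rcases h n with h | h <;> simp [h]

theorem exists_memLp_analyticPart (hf : MemLp f 2 haarAddCircle) :
    ∃ g : AddCircle T → ℂ, MemLp g 2 haarAddCircle ∧
      (∀ n : ℤ, n < 0 → fourierCoeff g n = 0) ∧
      ∀ n : ℤ, 0 ≤ n → fourierCoeff g n = fourierCoeff f n := by
  set a : lp (fun _ : ℤ => ℂ) 2 := fourierBasis.repr (hf.toLp f)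
  have hb : Memℓp (fun n : ℤ => if 0 ≤ n then a n else 0) 2 :=
    (lp.memℓp a).mono' fun n => by split_ifs <;> simp
  set G := (fourierBasis (T := T)).repr.symm (⟨_, hb⟩ : lp (fun _ : ℤ => ℂ) 2)
  have hG : ∀ n, fourierCoeff G n = if 0 ≤ n then a n else 0 := fun n => by
    rw [← fourierBasis_repr, LinearIsometryEquiv.apply_symm_apply]
  refine ⟨G, Lp.memLp G, fun n hn => ?_, fun n hn => ?_⟩
  · rw [hG, if_neg hn.not_ge]
  · rw [hG, if_pos hn, fourierBasis_repr, fourierCoeff_congr_ae hf.coeFn_toLp]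

end FourierL2

section RieszProjection

variable {f g y : UC → ℂ}

theorem Pplus_spec (hf : MemLp f 2 mUC) :
    MemLp (Pplus f) 2 mUC ∧ (∀ n : ℤ, n < 0 → fourierCoeff (Pplus f) n = 0) ∧
      ∀ n : ℤ, 0 ≤ n → fourierCoeff (Pplus f) n = fourierCoeff f n := by
  have h := exists_memLp_analyticPart hf
  rw [Pplus, dif_pos h]
  exact h.choose_spec

theorem memH2_Pplus (hf : MemLp f 2 mUC) : MemH2 (Pplus f) :=
  ⟨(Pplus_spec hf).1, (Pplus_spec hf).2.1⟩

def Pminus (f : UC → ℂ) : UC → ℂ := f - Pplus f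

theorem memLp_Pminus (hf : MemLp f 2 mUC) : MemLp (Pminus f) 2 mUC :=
  hf.sub (Pplus_spec hf).1

theorem fourierCoeff_Pminus_of_nonneg (hf : MemLp f 2 mUC) {n : ℤ} (hn : 0 ≤ n) :
    fourierCoeff (Pminus f) n = 0 := by
  have hPf := Pplus_spec hf
  rw [Pminus, fourierCoeff.sub (hf.integrable one_le_two) (hPf.1.integrable one_le_two),
    Pi.sub_apply, hPf.2.2 n hn, sub_self]

theorem integral_mul_conj_Pminus_of_memH2 (hy : MemH2 y) (hg : MemLp g 2 mUC) :
    ∫ t, y t * conj (Pminus g t) ∂mUC = 0 :=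
  integral_mul_conj_eq_zero_of_fourierCoeff hy.1 (memLp_Pminus hg) fun n =>
    (lt_or_ge n 0).imp (hy.2 n) (fourierCoeff_Pminus_of_nonneg hg)

theorem integral_Pminus_mul_conj_of_memH2 (hf : MemLp f 2 mUC) (hy : MemH2 y) :
    ∫ t, Pminus f t * conj (y t) ∂mUC = 0 :=
  integral_mul_conj_eq_zero_of_fourierCoeff (memLp_Pminus hf) hy.1 fun n =>
    (le_or_gt 0 n).imp (fourierCoeff_Pminus_of_nonneg hf) (hy.2 n)

theorem integral_mul_conj_eq_Pplus_add_Pminus (hf : MemLp f 2 mUC) (hg : MemLp g 2 mUC) :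
    ∫ t, f t * conj (g t) ∂mUC =
      (∫ t, Pplus f t * conj (Pplus g t) ∂mUC) + ∫ t, Pminus f t * conj (Pminus g t) ∂mUC := by
  have hPf := (Pplus_spec hf).1
  have hPg := (Pplus_spec hg).1
  have hQf := memLp_Pminus hf
  have hQg := memLp_Pminus hg
  have hsplit : (fun t => f t * conj (g t)) = fun t =>
      (Pplus f t * conj (Pplus g t) + Pplus f t * conj (Pminus g t)) +
        (Pminus f t * conj (Pplus g t) + Pminus f t * conj (Pminus g t)) := by
    funext t
    simp only [Pminus, Pi.sub_apply, map_sub]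
    ring
  have i₁ := hPf.integrable_mul_conj hPg
  have i₂ := hPf.integrable_mul_conj hQg
  have i₃ := hQf.integrable_mul_conj hPg
  have i₄ := hQf.integrable_mul_conj hQg
  rw [hsplit, integral_add (i₁.fun_add i₂) (i₃.fun_add i₄), integral_add i₁ i₂, integral_add i₃ i₄,
    integral_mul_conj_Pminus_of_memH2 (memH2_Pplus hf) hg,
    integral_Pminus_mul_conj_of_memH2 hf (memH2_Pplus hg), add_zero, zero_add]

end RieszProjection

section Hankel

variable {ψ b y q f g : UC → ℂ}

theorem integral_mul_conj_Pplus_of_memH2 (hy : MemH2 y) (hg : MemLp g 2 mUC) :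
    ∫ t, y t * conj (Pplus g t) ∂mUC = ∫ t, y t * conj (g t) ∂mUC := by
  have hsplit : (fun t => y t * conj (g t)) =
      fun t => y t * conj (Pplus g t) + y t * conj (Pminus g t) := by
    funext t
    simp only [Pminus, Pi.sub_apply, map_sub]
    ring
  rw [hsplit, integral_add (hy.1.integrable_mul_conj (Pplus_spec hg).1)
    (hy.1.integrable_mul_conj (memLp_Pminus hg)), integral_mul_conj_Pminus_of_memH2 hy hg,
    add_zero]

theorem integral_Pminus_mul_conj_Pminus (hf : MemLp f 2 mUC) (hg : MemLp g 2 mUC) :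
    ∫ t, Pminus f t * conj (Pminus g t) ∂mUC = ∫ t, f t * conj (Pminus g t) ∂mUC := by
  have hsplit : (fun t => f t * conj (Pminus g t)) =
      fun t => Pplus f t * conj (Pminus g t) + Pminus f t * conj (Pminus g t) := by
    funext t
    simp only [Pminus, Pi.sub_apply]
    ring
  rw [hsplit, integral_add ((Pplus_spec hf).1.integrable_mul_conj (memLp_Pminus hg))
    ((memLp_Pminus hf).integrable_mul_conj (memLp_Pminus hg)),
    integral_mul_conj_Pminus_of_memH2 (memH2_Pplus hf) hg, zero_add]

theorem integral_hankel_mul_conj_hankel (hb : MemLp b ∞ mUC) (hy : MemH2 y)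
    (hq : MemLp q 2 mUC) :
    ∫ t, Pminus (fun s => b s * y s) t * conj (Pminus (fun s => b s * q s) t) ∂mUC =
      ∫ t, y t * conj (Pplus (fun s => conj (b s) * Pminus (fun r => b r * q r) s) t) ∂mUC := by
  have hbv : MemLp (fun s => conj (b s) * Pminus (fun r => b r * q r) s) 2 mUC :=
    (memLp_Pminus (hq.mul' hb)).mul' hb.star
  rw [integral_Pminus_mul_conj_Pminus (hy.1.mul' hb) (hq.mul' hb),
    integral_mul_conj_Pplus_of_memH2 hy hbv]
  congr 1 with t
  simp only [map_mul, Complex.conj_conj]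
  ring

theorem integral_embedding_mul_conj_eq (hψ : MemLp ψ ∞ mUC) (hb : MemLp b ∞ mUC)
    (hnorm : ∀ᵐ t ∂mUC, ‖ψ t‖ ^ 2 + ‖b t‖ ^ 2 = 1) (hy : MemH2 y) (hq : MemLp q 2 mUC) :
    ∫ t, (ψ t * y t * conj (ψ t * q t) +
        Pplus (fun s => b s * y s) t * conj (Pplus (fun s => b s * q s) t)) ∂mUC =
      ∫ t, y t * conj (q t - Pplus (fun s => conj (b s) * Pminus (fun r => b r * q r) s) t)
        ∂mUC := by
  have hψy : MemLp (fun s => ψ s * y s) 2 mUC := hy.1.mul' hψ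
  have hψq : MemLp (fun s => ψ s * q s) 2 mUC := hq.mul' hψ
  have hby : MemLp (fun s => b s * y s) 2 mUC := hy.1.mul' hb
  have hbq : MemLp (fun s => b s * q s) 2 mUC := hq.mul' hb
  have hpointwise : (∫ t, ψ t * y t * conj (ψ t * q t) ∂mUC) +
      ∫ t, b t * y t * conj (b t * q t) ∂mUC = ∫ t, y t * conj (q t) ∂mUC := by
    rw [← integral_add (hψy.integrable_mul_conj hψq) (hby.integrable_mul_conj hbq)]
    refine integral_congr_ae (hnorm.mono fun t ht => ?_)
    have ht' : ψ t * conj (ψ t) + b t * conj (b t) = 1 := by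
      rw [Complex.mul_conj', Complex.mul_conj']
      exact_mod_cast ht
    simp only [map_mul]
    linear_combination (y t * conj (q t)) * ht'
  have hbv : MemLp (fun s => conj (b s) * Pminus (fun r => b r * q r) s) 2 mUC :=
    (memLp_Pminus hbq).mul' hb.star
  rw [integral_mul_conj_eq_Pplus_add_Pminus hby hbq, integral_hankel_mul_conj_hankel hb hy hq]
    at hpointwise
  simp only [map_sub, mul_sub]
  rw [integral_add (hψy.integrable_mul_conj hψq)
      ((Pplus_spec hby).1.integrable_mul_conj (Pplus_spec hbq).1),
    integral_sub (hy.1.integrable_mul_conj hq) (hy.1.integrable_mul_conj (Pplus_spec hbv).1)]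
  linear_combination hpointwise

end Hankel

section SchurGenerator

variable {φ ψ : UC → ℂ}

theorem IsOuter.ae_ne_zero {h : UC → ℂ} (hh : IsOuter h) : ∀ᵐ t ∂mUC, h t ≠ 0 := by
  obtain ⟨⟨hh2, -⟩, hdense⟩ := hh
  set E := {t | h t = 0}
  have hEmeas : NullMeasurableSet E mUC :=
    hh2.aestronglyMeasurable.nullMeasurableSet_eq_fun aestronglyMeasurable_const
  rw [ae_iff]
  simp only [ne_eq, not_not]
  by_contra hE
  change mUC E ≠ 0 at hE
  have hone : eLpNorm (fun _ => (1 : ℂ)) 2 (mUC.restrict E) = mUC E ^ (1 / 2 : ℝ) := by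
    rw [eLpNorm_const _ two_ne_zero (Measure.restrict_eq_zero.not.mpr hE)]
    simp
  have hpos : 0 < (mUC E ^ (1 / 2 : ℝ)).toReal :=
    ENNReal.toReal_pos (by simpa using hE) (by simp)
  have hone_mem : MemH2 (fun _ => (1 : ℂ)) := by
    refine ⟨memLp_const 1, fun n hn => ?_⟩
    rw [show (fun _ : UC => (1 : ℂ)) = fourier 0 from funext fun _ => fourier_zero.symm,
      fourierCoeff_fourier, Pi.single_eq_of_ne hn.ne]
  -- On `E` every `1 - h p` equals `1`, so its `L²` norm is at least `m(E)^{1/2}`.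
  obtain ⟨p, -, hp⟩ := hdense _ hone_mem _ hpos
  rw [ENNReal.ofReal_toReal (by simp), ← hone] at hp
  refine (hp.trans_le' ?_).false
  calc eLpNorm (fun _ => (1 : ℂ)) 2 (mUC.restrict E)
      = eLpNorm (fun t => 1 - h t * p t) 2 (mUC.restrict E) :=
        eLpNorm_congr_ae ((ae_restrict_mem₀ hEmeas).mono fun t (ht : h t = 0) => by simp [ht])
    _ ≤ _ := eLpNorm_restrict_le _ _ _ _

theorem norm_fzero_le (t : UC) : ‖fzero φ ψ t‖ ≤ ‖φ t‖ := by
  rcases eq_or_ne (ψ t) 0 with h | h <;> simp [fzero, h]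

theorem norm_fzero_of_ne_zero {t : UC} (h : ψ t ≠ 0) : ‖fzero φ ψ t‖ = ‖φ t‖ := by
  simp [fzero, h]

theorem memLp_top_fzero (hφ : MemLp φ ∞ mUC) (hψ : AEStronglyMeasurable ψ mUC) :
    MemLp (fzero φ ψ) ∞ mUC :=
  have := hφ.aestronglyMeasurable.aemeasurable
  have := hψ.aemeasurable
  hφ.of_le (by unfold fzero; fun_prop : AEMeasurable _ mUC).aestronglyMeasurable
    (ae_of_all _ fun _ => norm_fzero_le _)

theorem IsAssocOuter.memLp_top (hψ : IsAssocOuter φ ψ) : MemLp ψ ∞ mUC :=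
  memLp_top_of_bound hψ.1.1.1.aestronglyMeasurable 1 (hψ.2.1.mono fun t ht =>
    (sq_le_one_iff₀ (norm_nonneg _)).mp (by nlinarith [norm_nonneg (φ t)]))

theorem IsAssocOuter.norm_sq_add_norm_sq_fzero (hψ : IsAssocOuter φ ψ) :
    ∀ᵐ t ∂mUC, ‖ψ t‖ ^ 2 + ‖fzero φ ψ t‖ ^ 2 = 1 := by
  filter_upwards [hψ.1.ae_ne_zero, hψ.2.1] with t h0 h
  rw [norm_fzero_of_ne_zero h0, h]
  ring

end SchurGenerator

theorem reproducing_kernel_general (φ ψ : UC → ℂ)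
    (hφ : SchurGen φ) (hψ : IsAssocOuter φ ψ)
    (q : UC → ℂ) (hq : MemH2 q)
    (hq1 : (fun t => q t - Pplus (fun s => conj (fzero φ ψ s) *
        (fzero φ ψ s * q s - Pplus (fun r => fzero φ ψ r * q r) s)) t)
      =ᵐ[mUC] fun _ => (1 : ℂ)) :
    ∀ y : UC → ℂ, MemH2 y →
      (∫ t, (ψ t * y t * conj (fourierCoeff ψ 0 * (ψ t * q t)) +
        Pplus (fun s => fzero φ ψ s * y s) t *
          conj (fourierCoeff ψ 0 * Pplus (fun s => fzero φ ψ s * q s) t)) ∂mUC) =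
      fourierCoeff ψ 0 * fourierCoeff y 0 := by
  intro y hy
  have hconj : conj (fourierCoeff ψ 0) = fourierCoeff ψ 0 := Complex.conj_eq_iff_im.mpr hψ.2.2.2
  have hembed := integral_embedding_mul_conj_eq hψ.memLp_top
    (memLp_top_fzero hφ.1.1 hψ.1.1.1.aestronglyMeasurable) hψ.norm_sq_add_norm_sq_fzero hy hq.1
  calc _ = fourierCoeff ψ 0 * ∫ t, (ψ t * y t * conj (ψ t * q t) +
          Pplus (fun s => fzero φ ψ s * y s) t *
            conj (Pplus (fun s => fzero φ ψ s * q s) t)) ∂mUC := by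
        rw [← integral_const_mul]
        congr 1 with t
        simp only [map_mul, hconj]
        ring
    _ = fourierCoeff ψ 0 * ∫ t, y t ∂mUC := by
        rw [hembed]
        refine congrArg _ (integral_congr_ae (hq1.mono fun t ht => ?_))
        have ht' : q t - Pplus (fun s => conj (fzero φ ψ s) *
            Pminus (fun r => fzero φ ψ r * q r) s) t = 1 := ht
        simp only [ht', map_one, mul_one]
    _ = _ := by rw [fourierCoeff_zero_eq_integral y]

/-- If `‖Γ‖ < 1` and `q = (I - Γ*Γ)⁻¹1`, then
`ǩ = ψ̂(0)(ψq, P₊(f₀q))ᵀ` is the reproducing kernel at the origin of `Ȟ_φ`: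
`⟨(ψy, P₊(f₀y))ᵀ, ǩ⟩ = ψ̂(0)·ŷ(0)` for all `y ∈ H²`. -/
theorem reproducing_kernel (φ ψ : UC → ℂ)
    (hφ : SchurGen φ) (hψ : IsAssocOuter φ ψ)
    (hΓ : HankelNormLt1 (fzero φ ψ))
    (q : UC → ℂ) (hq : MemH2 q)
    (hq1 : (fun t => q t - Pplus (fun s => conj (fzero φ ψ s) *
        (fzero φ ψ s * q s - Pplus (fun r => fzero φ ψ r * q r) s)) t)
      =ᵐ[mUC] fun _ => (1 : ℂ)) :
    ∀ y : UC → ℂ, MemH2 y →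
      (∫ t, (ψ t * y t * conj (fourierCoeff ψ 0 * (ψ t * q t)) +
        Pplus (fun s => fzero φ ψ s * y s) t *
          conj (fourierCoeff ψ 0 * Pplus (fun s => fzero φ ψ s * q s) t)) ∂mUC) =
      fourierCoeff ψ 0 * fourierCoeff y 0 :=
  reproducing_kernel_general φ ψ hφ hψ q hq hq1
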